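/- arXiv:1911.13165 — 2 statements merged into one kernel-verified Lean document; each statement's English description precedes it below -/
import Mathlib

section
/- Suppose ℓ is bi-Lipschitz in the space variable: there exist constants 0 < c ≤ C such that c|x−y| ≤ |ℓ(t,x) − ℓ(t,y)| ≤ C|x−y| for all t ∈ [0,T] and x, y ∈ ℝ, almost surely, and y ↦ ℓ(t,y) is strictly increasing. Then the operator L_t(X) = inf{ x ≥ 0 : E[ℓ(t,x+X)] ≥ 0 } satisfies the Lipschitz estimate |L_t(X) − L_t(Y)| ≤ (C/c) · E[|X − Y|] for all X, Y ∈ L². -/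
open MeasureTheory Set

/-
Write `F_Z(x) = E[ℓ(x + Z)]`, so that `L(Z)` is the least `x ≥ 0` with `F_Z(x) ≥ 0`.
Pathwise, the bi-Lipschitz bounds make each `F_Z` continuous with slope at least `c`, and
`|F_X - F_Y| ≤ C E|X - Y| =: ε` uniformly. At `a = L(X)` we have `F_X(a) ≥ 0`, hence
`F_Y(a + ε/c) ≥ F_Y(a) + ε ≥ F_X(a) ≥ 0`, i.e. `L(Y) ≤ L(X) + ε/c`; then swap `X` and `Y`.
-/

noncomputable def nonnegThreshold (F : ℝ → ℝ) : ℝ :=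
  sInf {x : ℝ | 0 ≤ x ∧ 0 ≤ F x}

section Threshold

variable {F G : ℝ → ℝ} {c ε : ℝ}

lemma nonempty_nonnegThreshold_set (hc : 0 < c)
    (hF : ∀ x y, x ≤ y → c * (y - x) ≤ F y - F x) :
    {x : ℝ | 0 ≤ x ∧ 0 ≤ F x}.Nonempty := by
  set x := max 0 (-F 0 / c)
  have hx : -F 0 / c ≤ x := le_max_right _ _
  rw [div_le_iff₀ hc] at hx
  refine ⟨x, le_max_left _ _, ?_⟩
  nlinarith [hF 0 x (le_max_left _ _)]

lemma nonnegThreshold_mem (hFc : Continuous F) (hne : {x : ℝ | 0 ≤ x ∧ 0 ≤ F x}.Nonempty) :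
    0 ≤ nonnegThreshold F ∧ 0 ≤ F (nonnegThreshold F) :=
  ((isClosed_le continuous_const continuous_id).inter (isClosed_le continuous_const hFc)).csInf_mem
    hne ⟨0, fun _ hx => hx.1⟩

lemma nonnegThreshold_le_add (hc : 0 < c) (hε : 0 ≤ ε) (hFc : Continuous F)
    (hne : {x : ℝ | 0 ≤ x ∧ 0 ≤ F x}.Nonempty)
    (hG : ∀ x y, x ≤ y → c * (y - x) ≤ G y - G x) (hFG : ∀ x, F x ≤ G x + ε) :
    nonnegThreshold G ≤ nonnegThreshold F + ε / c := by
  obtain ⟨ha, hFa⟩ := nonnegThreshold_mem hFc hne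
  set a := nonnegThreshold F
  have hεc : 0 ≤ ε / c := div_nonneg hε hc.le
  have hGa : G a + ε ≤ G (a + ε / c) := by
    have := hG a (a + ε / c) (by linarith)
    rwa [add_sub_cancel_left, mul_div_cancel₀ _ hc.ne', le_sub_iff_add_le'] at this
  exact csInf_le ⟨0, fun _ hx => hx.1⟩ ⟨by linarith, by linarith [hFG a]⟩

lemma abs_nonnegThreshold_sub_le (hc : 0 < c) (hε : 0 ≤ ε)
    (hFc : Continuous F) (hGc : Continuous G)
    (hF : ∀ x y, x ≤ y → c * (y - x) ≤ F y - F x)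
    (hG : ∀ x y, x ≤ y → c * (y - x) ≤ G y - G x) (hFG : ∀ x, |F x - G x| ≤ ε) :
    |nonnegThreshold F - nonnegThreshold G| ≤ ε / c := by
  have h₁ := nonnegThreshold_le_add hc hε hFc (nonempty_nonnegThreshold_set hc hF) hG
    fun x => by linarith [(abs_le.mp (hFG x)).2]
  have h₂ := nonnegThreshold_le_add hc hε hGc (nonempty_nonnegThreshold_set hc hG) hF
    fun x => by linarith [(abs_le.mp (hFG x)).1]
  rw [abs_sub_le_iff]
  constructor <;> linarith

end Threshold

lemma mul_sub_le_sub_of_strictMono {f : ℝ → ℝ} {c : ℝ} (hf : StrictMono f)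
    (hlow : ∀ x y, c * |x - y| ≤ |f x - f y|) {x y : ℝ} (hxy : x ≤ y) :
    c * (y - x) ≤ f y - f x := by
  have := hlow y x
  rwa [abs_of_nonneg (sub_nonneg.mpr hxy),
    abs_of_nonneg (sub_nonneg.mpr (hf.monotone hxy))] at this

lemma abs_integral_sub_integral_le {Ω : Type*} [MeasurableSpace Ω] {μ : Measure Ω}
    {f g h : Ω → ℝ} (hf : Integrable f μ) (hg : Integrable g μ) (hh : Integrable h μ)
    (hfg : ∀ᵐ ω ∂μ, |f ω - g ω| ≤ h ω) :
    |∫ ω, f ω ∂μ - ∫ ω, g ω ∂μ| ≤ ∫ ω, h ω ∂μ := by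
  rw [← integral_sub hf hg]
  exact abs_integral_le_integral_abs.trans (integral_mono_ae (hf.sub hg).abs hh hfg)

noncomputable def expectedShift {Ω : Type*} [MeasurableSpace Ω] (μ : Measure Ω)
    (ℓ : Ω → ℝ → ℝ) (Z : Ω → ℝ) : ℝ → ℝ :=
  fun x => ∫ ω, ℓ ω (x + Z ω) ∂μ

section ExpectedShift

variable {Ω : Type*} [MeasurableSpace Ω] {μ : Measure Ω} {ℓ : Ω → ℝ → ℝ} {c C : ℝ}
  {Z : Ω → ℝ}

lemma mul_sub_le_expectedShift_sub [IsProbabilityMeasure μ]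
    (hmono : ∀ᵐ ω ∂μ, StrictMono (ℓ ω))
    (hlow : ∀ᵐ ω ∂μ, ∀ x y, c * |x - y| ≤ |ℓ ω x - ℓ ω y|)
    (hint : ∀ x, Integrable (fun ω => ℓ ω (x + Z ω)) μ) {x y : ℝ} (hxy : x ≤ y) :
    c * (y - x) ≤ expectedShift μ ℓ Z y - expectedShift μ ℓ Z x := by
  have hpt : ∀ᵐ ω ∂μ, c * (y - x) ≤ ℓ ω (y + Z ω) - ℓ ω (x + Z ω) := by
    filter_upwards [hmono, hlow] with ω hm hl
    have := mul_sub_le_sub_of_strictMono hm hl (show x + Z ω ≤ y + Z ω by linarith)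
    rwa [add_sub_add_right_eq_sub] at this
  calc c * (y - x) = ∫ _, c * (y - x) ∂μ := by simp
    _ ≤ ∫ ω, ℓ ω (y + Z ω) - ℓ ω (x + Z ω) ∂μ :=
      integral_mono_ae (integrable_const _) ((hint y).sub (hint x)) hpt
    _ = _ := integral_sub (hint y) (hint x)

lemma abs_expectedShift_sub_le [IsProbabilityMeasure μ]
    (hup : ∀ᵐ ω ∂μ, ∀ x y, |ℓ ω x - ℓ ω y| ≤ C * |x - y|)
    (hint : ∀ x, Integrable (fun ω => ℓ ω (x + Z ω)) μ) (x y : ℝ) :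
    |expectedShift μ ℓ Z x - expectedShift μ ℓ Z y| ≤ C * |x - y| := by
  have hpt : ∀ᵐ ω ∂μ, |ℓ ω (x + Z ω) - ℓ ω (y + Z ω)| ≤ C * |x - y| := by
    filter_upwards [hup] with ω hu
    simpa using hu (x + Z ω) (y + Z ω)
  simpa [expectedShift] using
    abs_integral_sub_integral_le (hint x) (hint y) (integrable_const _) hpt

lemma continuous_expectedShift [IsProbabilityMeasure μ]
    (hup : ∀ᵐ ω ∂μ, ∀ x y, |ℓ ω x - ℓ ω y| ≤ C * |x - y|)
    (hint : ∀ x, Integrable (fun ω => ℓ ω (x + Z ω)) μ) :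
    Continuous (expectedShift μ ℓ Z) :=
  (LipschitzWith.of_dist_le' (K := C) fun x y => by
    simpa only [Real.dist_eq] using abs_expectedShift_sub_le hup hint x y).continuous

lemma abs_expectedShift_sub_expectedShift_le {X Y : Ω → ℝ}
    (hup : ∀ᵐ ω ∂μ, ∀ x y, |ℓ ω x - ℓ ω y| ≤ C * |x - y|)
    (hintX : ∀ x, Integrable (fun ω => ℓ ω (x + X ω)) μ)
    (hintY : ∀ x, Integrable (fun ω => ℓ ω (x + Y ω)) μ)
    (hXY : Integrable (fun ω => |X ω - Y ω|) μ) (x : ℝ) :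
    |expectedShift μ ℓ X x - expectedShift μ ℓ Y x| ≤ C * ∫ ω, |X ω - Y ω| ∂μ := by
  have hpt : ∀ᵐ ω ∂μ, |ℓ ω (x + X ω) - ℓ ω (x + Y ω)| ≤ C * |X ω - Y ω| := by
    filter_upwards [hup] with ω hu
    simpa using hu (x + X ω) (x + Y ω)
  rw [← integral_const_mul]
  exact abs_integral_sub_integral_le (hintX x) (hintY x) (hXY.const_mul C) hpt

end ExpectedShift

theorem stmt1_general {Ω : Type*} [MeasurableSpace Ω] (μ : Measure Ω) [IsProbabilityMeasure μ]
    (ℓ : Ω → ℝ → ℝ) (c C : ℝ) (hc : 0 < c) (hcC : c ≤ C)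
    (hmono : ∀ᵐ ω ∂μ, StrictMono (ℓ ω))
    (hbilip : ∀ᵐ ω ∂μ, ∀ x y : ℝ,
      c * |x - y| ≤ |ℓ ω x - ℓ ω y| ∧ |ℓ ω x - ℓ ω y| ≤ C * |x - y|)
    (X Y : Ω → ℝ) (hX : MemLp X 2 μ) (hY : MemLp Y 2 μ)
    (hintX : ∀ x : ℝ, Integrable (fun ω => ℓ ω (x + X ω)) μ)
    (hintY : ∀ x : ℝ, Integrable (fun ω => ℓ ω (x + Y ω)) μ) :
    |sInf {x : ℝ | 0 ≤ x ∧ 0 ≤ ∫ ω, ℓ ω (x + X ω) ∂μ} -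
        sInf {x : ℝ | 0 ≤ x ∧ 0 ≤ ∫ ω, ℓ ω (x + Y ω) ∂μ}| ≤
      (C / c) * ∫ ω, |X ω - Y ω| ∂μ := by
  have hlow : ∀ᵐ ω ∂μ, ∀ x y, c * |x - y| ≤ |ℓ ω x - ℓ ω y| := by
    filter_upwards [hbilip] with ω h x y using (h x y).1
  have hup : ∀ᵐ ω ∂μ, ∀ x y, |ℓ ω x - ℓ ω y| ≤ C * |x - y| := by
    filter_upwards [hbilip] with ω h x y using (h x y).2
  have hXY : Integrable (fun ω => |X ω - Y ω|) μ := ((hX.sub hY).integrable one_le_two).abs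
  have hε : 0 ≤ C * ∫ ω, |X ω - Y ω| ∂μ :=
    mul_nonneg (hc.le.trans hcC) (integral_nonneg fun _ => abs_nonneg _)
  have key := abs_nonnegThreshold_sub_le hc hε
    (continuous_expectedShift hup hintX) (continuous_expectedShift hup hintY)
    (fun _ _ => mul_sub_le_expectedShift_sub hmono hlow hintX)
    (fun _ _ => mul_sub_le_expectedShift_sub hmono hlow hintY)
    (abs_expectedShift_sub_expectedShift_le hup hintX hintY hXY)
  rwa [mul_div_right_comm] at key

/-- If `ℓ` is bi-Lipschitz in the space variable with constants `0 < c ≤ C` and strictly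
increasing, then the reflection operator `L_t(X) = inf{x ≥ 0 : E[ℓ(t,x+X)] ≥ 0}` is
Lipschitz: `|L_t(X) - L_t(Y)| ≤ (C/c) E[|X - Y|]`. -/
theorem stmt1 {Ω : Type*} [MeasurableSpace Ω] (μ : Measure Ω) [IsProbabilityMeasure μ]
    (ℓ : Ω → ℝ → ℝ) (c C : ℝ) (hc : 0 < c) (hcC : c ≤ C)
    (hmono : ∀ᵐ ω ∂μ, StrictMono (ℓ ω))
    (hcont : ∀ᵐ ω ∂μ, Continuous (ℓ ω))
    (hbilip : ∀ᵐ ω ∂μ, ∀ x y : ℝ,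
      c * |x - y| ≤ |ℓ ω x - ℓ ω y| ∧ |ℓ ω x - ℓ ω y| ≤ C * |x - y|)
    (X Y : Ω → ℝ) (hX : MemLp X 2 μ) (hY : MemLp Y 2 μ)
    (hintX : ∀ x : ℝ, Integrable (fun ω => ℓ ω (x + X ω)) μ)
    (hintY : ∀ x : ℝ, Integrable (fun ω => ℓ ω (x + Y ω)) μ) :
    |sInf {x : ℝ | 0 ≤ x ∧ 0 ≤ ∫ ω, ℓ ω (x + X ω) ∂μ} -
        sInf {x : ℝ | 0 ≤ x ∧ 0 ≤ ∫ ω, ℓ ω (x + Y ω) ∂μ}| ≤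
      (C / c) * ∫ ω, |X ω - Y ω| ∂μ :=
  stmt1_general μ ℓ c C hc hcC hmono hbilip X Y hX hY hintX hintY
end

section
/- Let z₁, z₂ : [0,T] → [0,∞) be measurable with ∫₀ᵀ zᵢ(s)² ds ≤ A² for i = 1,2, and let α ∈ [0,1). Then ∫₀ᵀ (1 + z₁(s)^α + z₂(s)^α) |z₁(s) − z₂(s)| ds ≤ √(3T + 6 T^{1−α} A^{2α}) · (∫₀ᵀ |z₁(s) − z₂(s)|² ds)^{1/2}. -/
/-!
Cauchy–Schwarz bounds the integral by `‖1 + z₁^α + z₂^α‖₂ ‖z₁ - z₂‖₂`, and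
`(1 + a + b)² ≤ 3 (1 + a² + b²)` reduces the first factor to `T + ∫ z₁^{2α} + ∫ z₂^{2α}`.
Jensen's inequality for the concave map `t ↦ t^α` gives
`∫ (zᵢ²)^α ≤ T^{1-α} (∫ zᵢ²)^α ≤ T^{1-α} A^{2α}`.
-/

open MeasureTheory Set

theorem one_add_add_sq_le (a b : ℝ) : (1 + a + b) ^ 2 ≤ 3 * (1 + a ^ 2 + b ^ 2) := by
  nlinarith [sq_nonneg (a - b), sq_nonneg (a - 1), sq_nonneg (b - 1)]

namespace MeasureTheory

variable {X : Type*} [MeasurableSpace X] {μ : Measure X}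

theorem integral_mul_le_sqrt_integral_sq_mul_sqrt_integral_sq {f g : X → ℝ}
    (hf : 0 ≤ᵐ[μ] f) (hg : 0 ≤ᵐ[μ] g) (hf₂ : MemLp f 2 μ) (hg₂ : MemLp g 2 μ) :
    ∫ x, f x * g x ∂μ ≤ √(∫ x, f x ^ 2 ∂μ) * √(∫ x, g x ^ 2 ∂μ) := by
  have holder := integral_mul_le_Lp_mul_Lq_of_nonneg Real.HolderConjugate.two_two hf hg
    (by rwa [ENNReal.ofReal_ofNat]) (by rwa [ENNReal.ofReal_ofNat])
  simpa only [Real.rpow_two, ← Real.sqrt_eq_rpow] using holder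

theorem memLp_two_of_integrable_rpow_two {z : X → ℝ} (hzm : AEStronglyMeasurable z μ)
    (hzi : Integrable (fun x => z x ^ (2 : ℝ)) μ) : MemLp z 2 μ :=
  (memLp_two_iff_integrable_sq hzm).2 (hzi.congr (ae_of_all μ fun x => Real.rpow_two (z x)))

theorem memLp_two_rpow_of_integrable_rpow_two_mul {z : X → ℝ} (hz : 0 ≤ᵐ[μ] z)
    (hzm : AEMeasurable z μ) {α : ℝ} (hzi : Integrable (fun x => z x ^ (2 * α)) μ) :
    MemLp (fun x => z x ^ α) 2 μ := by
  refine (memLp_two_iff_integrable_sq (hzm.pow_const α).aestronglyMeasurable).2 (hzi.congr ?_)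
  filter_upwards [hz] with x (hx : 0 ≤ z x)
  rw [mul_comm, Real.rpow_mul hx, Real.rpow_two]

variable [IsFiniteMeasure μ]

theorem Integrable.rpow_of_nonneg_of_le_one {g : X → ℝ} (hg : 0 ≤ᵐ[μ] g) (hgi : Integrable g μ)
    {θ : ℝ} (hθ₀ : 0 ≤ θ) (hθ₁ : θ ≤ 1) : Integrable (fun x => g x ^ θ) μ := by
  refine ((integrable_const 1).add hgi).mono'
    (hgi.aemeasurable.pow_const θ).aestronglyMeasurable ?_
  filter_upwards [hg] with x (hx : 0 ≤ g x)
  rw [Real.norm_of_nonneg (Real.rpow_nonneg hx θ), Pi.add_apply]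
  rcases le_total (g x) 1 with h | h
  · linarith [Real.rpow_le_one hx h hθ₀]
  · linarith [Real.rpow_le_self_of_one_le h hθ₁]

theorem integral_rpow_le_measureReal_rpow_mul_integral_rpow {g : X → ℝ} (hg : 0 ≤ᵐ[μ] g)
    (hgi : Integrable g μ) {θ : ℝ} (hθ₀ : 0 ≤ θ) (hθ₁ : θ ≤ 1) :
    ∫ x, g x ^ θ ∂μ ≤ μ.real univ ^ (1 - θ) * (∫ x, g x ∂μ) ^ θ := by
  rcases eq_zero_or_neZero μ with rfl | hμ
  · simp only [integral_zero_measure]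
    positivity
  have hm : 0 < μ.real univ := by
    simpa [measureReal_def, ENNReal.toReal_pos_iff, measure_lt_top] using hμ.out
  have jensen := (Real.concaveOn_rpow hθ₀ hθ₁).le_map_average
    (continuousOn_id.rpow_const fun _ _ => Or.inr hθ₀) isClosed_Ici hg hgi
    (hgi.rpow_of_nonneg_of_le_one hg hθ₀ hθ₁)
  simp only [average_eq, smul_eq_mul] at jensen
  rw [Real.mul_rpow (inv_nonneg.2 hm.le) (integral_nonneg_of_ae hg), Real.inv_rpow hm.le,
    inv_mul_le_iff₀ hm, ← mul_assoc, ← div_eq_mul_inv] at jensen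
  rwa [Real.rpow_sub hm, Real.rpow_one]

theorem integral_rpow_two_mul_le {z : X → ℝ} (hz : 0 ≤ᵐ[μ] z)
    (hzi : Integrable (fun x => z x ^ (2 : ℝ)) μ) {A : ℝ} (hA : 0 ≤ A)
    (hzA : ∫ x, z x ^ (2 : ℝ) ∂μ ≤ A ^ 2) {α : ℝ} (hα₀ : 0 ≤ α) (hα₁ : α ≤ 1) :
    Integrable (fun x => z x ^ (2 * α)) μ ∧
      ∫ x, z x ^ (2 * α) ∂μ ≤ μ.real univ ^ (1 - α) * A ^ (2 * α) := by
  have hpow : (fun x => z x ^ (2 * α)) =ᵐ[μ] fun x => (z x ^ (2 : ℝ)) ^ α := by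
    filter_upwards [hz] with x (hx : 0 ≤ z x)
    exact Real.rpow_mul hx 2 α
  have hz₂ : 0 ≤ᵐ[μ] fun x => z x ^ (2 : ℝ) := by
    filter_upwards [hz] with x (hx : 0 ≤ z x)
    exact Real.rpow_nonneg hx 2
  refine ⟨(hzi.rpow_of_nonneg_of_le_one hz₂ hα₀ hα₁).congr hpow.symm, ?_⟩
  rw [integral_congr_ae hpow, Real.rpow_mul hA]
  calc ∫ x, (z x ^ (2 : ℝ)) ^ α ∂μ
      ≤ μ.real univ ^ (1 - α) * (∫ x, z x ^ (2 : ℝ) ∂μ) ^ α :=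
        integral_rpow_le_measureReal_rpow_mul_integral_rpow hz₂ hzi hα₀ hα₁
    _ ≤ μ.real univ ^ (1 - α) * (A ^ (2 : ℝ)) ^ α := by
        gcongr
        · exact integral_nonneg_of_ae hz₂
        · rwa [Real.rpow_two A]

theorem memLp_two_one_add_rpow_add_rpow {z₁ z₂ : X → ℝ} (hz₁ : 0 ≤ᵐ[μ] z₁) (hz₂ : 0 ≤ᵐ[μ] z₂)
    (hm₁ : AEMeasurable z₁ μ) (hm₂ : AEMeasurable z₂ μ) {α : ℝ}
    (hw₁ : Integrable (fun x => z₁ x ^ (2 * α)) μ) (hw₂ : Integrable (fun x => z₂ x ^ (2 * α)) μ) :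
    MemLp (fun x => 1 + z₁ x ^ α + z₂ x ^ α) 2 μ :=
  ((memLp_const (p := 2) (1 : ℝ)).add
    (memLp_two_rpow_of_integrable_rpow_two_mul hz₁ hm₁ hw₁)).add
    (memLp_two_rpow_of_integrable_rpow_two_mul hz₂ hm₂ hw₂)

theorem integral_one_add_rpow_add_rpow_sq_le {z₁ z₂ : X → ℝ} (hz₁ : 0 ≤ᵐ[μ] z₁)
    (hz₂ : 0 ≤ᵐ[μ] z₂) (hm₁ : AEMeasurable z₁ μ) (hm₂ : AEMeasurable z₂ μ) {α : ℝ}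
    (hw₁ : Integrable (fun x => z₁ x ^ (2 * α)) μ) (hw₂ : Integrable (fun x => z₂ x ^ (2 * α)) μ) :
    ∫ x, (1 + z₁ x ^ α + z₂ x ^ α) ^ 2 ∂μ ≤
      3 * (μ.real univ + ∫ x, z₁ x ^ (2 * α) ∂μ + ∫ x, z₂ x ^ (2 * α) ∂μ) := by
  have hw₁' : Integrable (fun x => 1 + z₁ x ^ (2 * α)) μ := (integrable_const 1).add hw₁
  calc ∫ x, (1 + z₁ x ^ α + z₂ x ^ α) ^ 2 ∂μ
      ≤ ∫ x, 3 * (1 + z₁ x ^ (2 * α) + z₂ x ^ (2 * α)) ∂μ := by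
        refine integral_mono_ae
          (memLp_two_one_add_rpow_add_rpow hz₁ hz₂ hm₁ hm₂ hw₁ hw₂).integrable_sq
          ((hw₁'.add hw₂).const_mul 3) ?_
        filter_upwards [hz₁, hz₂] with x (hx₁ : 0 ≤ z₁ x) (hx₂ : 0 ≤ z₂ x)
        simpa only [mul_comm 2 α, Real.rpow_mul hx₁, Real.rpow_mul hx₂, Real.rpow_two]
          using one_add_add_sq_le (z₁ x ^ α) (z₂ x ^ α)
    _ = 3 * (μ.real univ + ∫ x, z₁ x ^ (2 * α) ∂μ + ∫ x, z₂ x ^ (2 * α) ∂μ) := by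
        rw [integral_const_mul, integral_add hw₁' hw₂, integral_add (integrable_const 1) hw₁,
          integral_const, smul_eq_mul, mul_one]

end MeasureTheory

/-- Key Hölder estimate (13q): for nonnegative `z₁, z₂` with `∫₀ᵀ zᵢ² ≤ A²` and `α ∈ [0,1)`,
`∫₀ᵀ (1 + z₁^α + z₂^α)|z₁ - z₂| ds ≤ √(3T + 6T^{1-α}A^{2α}) (∫₀ᵀ |z₁-z₂|² ds)^{1/2}`. -/
theorem stmt6 (T A α : ℝ) (hT : 0 ≤ T) (hA : 0 < A) (hα : α ∈ Set.Ico (0 : ℝ) 1)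
    (z₁ z₂ : ℝ → ℝ) (hz₁ : ∀ s, 0 ≤ z₁ s) (hz₂ : ∀ s, 0 ≤ z₂ s)
    (hm₁ : Measurable z₁) (hm₂ : Measurable z₂)
    (hint₁ : IntegrableOn (fun s => z₁ s ^ (2 : ℝ)) (Set.Ioc 0 T))
    (hint₂ : IntegrableOn (fun s => z₂ s ^ (2 : ℝ)) (Set.Ioc 0 T))
    (hA₁ : ∫ s in Set.Ioc (0 : ℝ) T, z₁ s ^ (2 : ℝ) ≤ A ^ 2)
    (hA₂ : ∫ s in Set.Ioc (0 : ℝ) T, z₂ s ^ (2 : ℝ) ≤ A ^ 2) :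
    ∫ s in Set.Ioc (0 : ℝ) T, (1 + z₁ s ^ α + z₂ s ^ α) * |z₁ s - z₂ s| ≤
      Real.sqrt (3 * T + 6 * T ^ (1 - α) * A ^ (2 * α)) *
        Real.sqrt (∫ s in Set.Ioc (0 : ℝ) T, |z₁ s - z₂ s| ^ 2) := by
  obtain ⟨hα₀, hα₁⟩ := hα
  set μ := volume.restrict (Ioc (0 : ℝ) T)
  have hμ : μ.real univ = T := by simp [μ, hT]
  have hz₁' : 0 ≤ᵐ[μ] z₁ := ae_of_all μ hz₁
  have hz₂' : 0 ≤ᵐ[μ] z₂ := ae_of_all μ hz₂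
  obtain ⟨hw₁, hW₁⟩ := integral_rpow_two_mul_le hz₁' hint₁ hA.le hA₁ hα₀ hα₁.le
  obtain ⟨hw₂, hW₂⟩ := integral_rpow_two_mul_le hz₂' hint₂ hA.le hA₂ hα₀ hα₁.le
  have hf_sq := integral_one_add_rpow_add_rpow_sq_le hz₁' hz₂' hm₁.aemeasurable hm₂.aemeasurable
    hw₁ hw₂
  rw [hμ] at hf_sq hW₁ hW₂
  have hg : MemLp (fun s => |z₁ s - z₂ s|) 2 μ :=
    ((memLp_two_of_integrable_rpow_two hm₁.aestronglyMeasurable hint₁).sub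
      (memLp_two_of_integrable_rpow_two hm₂.aestronglyMeasurable hint₂)).abs
  calc ∫ s, (1 + z₁ s ^ α + z₂ s ^ α) * |z₁ s - z₂ s| ∂μ
      ≤ √(∫ s, (1 + z₁ s ^ α + z₂ s ^ α) ^ 2 ∂μ) * √(∫ s, |z₁ s - z₂ s| ^ 2 ∂μ) :=
        integral_mul_le_sqrt_integral_sq_mul_sqrt_integral_sq
          (ae_of_all μ fun s => by have := hz₁ s; have := hz₂ s; positivity)
          (ae_of_all μ fun s => abs_nonneg _)
          (memLp_two_one_add_rpow_add_rpow hz₁' hz₂' hm₁.aemeasurable hm₂.aemeasurable hw₁ hw₂) hg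
    _ ≤ √(3 * T + 6 * T ^ (1 - α) * A ^ (2 * α)) * √(∫ s, |z₁ s - z₂ s| ^ 2 ∂μ) := by
        gcongr
        linarith
end
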